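/- Let X be a very general sextic surface in P^3. Then every rank 2 Ulrich bundle E on X has c_1(E) = 5H and c_2(E) = 55, and E is mu_H-stable. -/
import Mathlib


/-- Abstract data of vector bundles on a very general sextic surface `X ⊂ ℙ³`
(`Pic(X) = ℤ·H`, `H² = 6`, `ω_X = O_X(2)` so `m = 2`, `h^0(ω_X) = 10`): bundles
with rank, Chern data `c₁(E) = c1 E · H` and `c₂(E) = c2 E`, the Ulrich,
`μ_H`-semistability and `μ_H`-stability predicates.  The fields record the facts
from the characterization of Ulrich bundles on an AG surface:
`c₁(E)·H = 6·c1 E = 15·rk E`; the `c₂`-formula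
`c₂(E) = c₁(E)²/2 - d·r·(m²+3m+4)/4 + r(1 + h^0(ω_X))`, written integrally as
`4·c₂ = 2·(c1 E)²·6 - 6·r·14 + 4·r·11` for rank `r`; semistability of Ulrich
bundles; and the fact that a strictly semistable Ulrich bundle of rank `≥ 2` is
destabilized by an Ulrich subbundle of strictly smaller (nonzero) rank. -/
structure UlrichRankTwoData where
  /-- vector bundles on `X` -/
  Bundle : Type
  rk : Bundle → ℕ
  /-- `c₁(E) = c1 E · H` -/
  c1 : Bundle → ℤ
  /-- `c₂(E)` -/
  c2 : Bundle → ℤ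
  IsUlrich : Bundle → Prop
  IsSemistable : Bundle → Prop
  IsStable : Bundle → Prop
  /-- `c₁(E)·H = 15·rk E` for Ulrich `E` -/
  ulrich_degree : ∀ E : Bundle, IsUlrich E → 6 * c1 E = 15 * (rk E : ℤ)
  /-- `c₂(E) = c₁(E)²/2 - d·r·(m²+3m+4)/4 + r(1 + h^0(ω_X))` with `d = 6`,
  `m = 2`, `h^0(ω_X) = 10`; integrally: `4·c₂(E) = 2·(c1 E)²·6 - 84·r + 44·r` -/
  ulrich_c2 : ∀ E : Bundle, IsUlrich E →
    4 * c2 E = 2 * (c1 E) ^ 2 * 6 - 6 * (rk E : ℤ) * 14 + 4 * (rk E : ℤ) * 11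
  /-- Ulrich bundles are slope-semistable -/
  ulrich_semistable : ∀ E : Bundle, IsUlrich E → IsSemistable E
  /-- a strictly semistable Ulrich bundle of rank `r ≥ 2` is destabilized by an
  Ulrich subbundle of strictly smaller nonzero rank -/
  strictly_semistable_destab : ∀ E : Bundle, IsUlrich E → IsSemistable E →
    ¬ IsStable E → ∃ F : Bundle, IsUlrich F ∧ 0 < rk F ∧ rk F < rk E

/-- On a very general sextic surface `X ⊂ ℙ³`, every rank-2 Ulrich bundle `E` has
`c₁(E) = 5H` and `c₂(E) = 55`, and `E` is `μ_H`-stable. -/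
theorem stmt16 (D : UlrichRankTwoData) (E : D.Bundle) (hU : D.IsUlrich E)
    (hr : D.rk E = 2) :
    D.c1 E = 5 ∧ D.c2 E = 55 ∧ D.IsStable E := by
  have hdeg := D.ulrich_degree E hU
  rw [hr] at hdeg
  have hc1 : D.c1 E = 5 := by omega
  have hc2 := D.ulrich_c2 E hU
  rw [hr, hc1] at hc2
  have hc2' : D.c2 E = 55 := by omega
  refine ⟨hc1, hc2', ?_⟩
  by_contra hns
  obtain ⟨F, hFU, hF0, hFr⟩ :=
    D.strictly_semistable_destab E hU (D.ulrich_semistable E hU) hns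
  have hdF := D.ulrich_degree F hFU
  rw [hr] at hFr
  have h1 : D.rk F = 1 := by omega
  rw [h1] at hdF
  omega
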